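/- Let q ≥ 2 and 0 < α < 1, and consider the Markov chain on T_q with transition matrix P₁ = P_{1,α}; put F⁻ = min{1, (1−α)/α} and F⁺ = min{1/q, α/((1−α)q)}. Let ξ : ℤ → ZMod q be a configuration with support bounded below, and for m ∈ ℤ let u_m = (σ_m, m) ∈ T_q where σ_m(n) = ξ(m+n) for n ≤ 0 and σ_m(n) = 0 for n > 0 (the vertices of the geodesic from ω to the end encoded by ξ). Then for every x = (σ,k) ∈ T_q: (i) the ratio F(x,u_m)/F(o,u_m) is eventually constant as m → +∞, with value (F⁻)^k · (F⁻F⁺)^{b(o,ξ) − b(x,ξ)}; (ii) the ratio F(x,u_m)/F(o,u_m) is eventually constant as m → −∞, with value (F⁻)^k. -/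

import Mathlib

open scoped Classical

noncomputable section

namespace LampDL

variable {X : Type*}

/-- `n`-step transition probabilities of the Markov chain with transition matrix `p`. -/
def matpow (p : X → X → ℝ) : ℕ → X → X → ℝ
  | 0 => fun x y => if x = y then 1 else 0
  | n + 1 => fun x y => ∑' z, p x z * matpow p n z y

/-- A (countable) stochastic transition matrix. -/
def IsStochastic (p : X → X → ℝ) : Prop :=
  (∀ x y, 0 ≤ p x y) ∧ ∀ x, HasSum (p x) 1

/-- Irreducibility: some power has positive entry for every pair. -/
def IsIrreducible (p : X → X → ℝ) : Prop := ∀ x y, ∃ n, 0 < matpow p n x y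

/-- `hitBefore p A y n x` is the probability that the chain started at `x` avoids `A`
at all times `< n` and is at `y` at time `n`.  For `y ∈ A`, summing over `n` yields
`F^A(x,y) = Pr_x[s^y ≤ s^A, s^y < ∞]`. -/
def hitBefore (p : X → X → ℝ) (A : Set X) (y : X) : ℕ → X → ℝ
  | 0 => fun x => if x = y then 1 else 0
  | n + 1 => fun x => if x ∈ A then 0 else ∑' z, p x z * hitBefore p A y n z

/-- `F^A(x,y) = Pr_x[s^y ≤ s^A, s^y < ∞]` (for `y ∈ A`). -/
def FA (p : X → X → ℝ) (A : Set X) (x y : X) : ℝ := ∑' n, hitBefore p A y n x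

/-- `F(x,y) = Pr_x[s^y < ∞]`, the probability of ever hitting `y` from `x`. -/
def Fhit (p : X → X → ℝ) (x y : X) : ℝ := FA p {y} x y

/-- A function is `P`-harmonic if `∑_y p(x,y) h(y) = h(x)` for every `x`. -/
def IsHarmonic (p : X → X → ℝ) (h : X → ℝ) : Prop := ∀ x, ∑' y, p x y * h y = h x

/-- A minimal harmonic function (w.r.t. the reference point `o`). -/
def IsMinimalHarmonic (p : X → X → ℝ) (o : X) (h : X → ℝ) : Prop :=
  IsHarmonic p h ∧ (∀ x, 0 ≤ h x) ∧ h o = 1 ∧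
    ∀ h₁ : X → ℝ, IsHarmonic p h₁ → (∀ x, 0 ≤ h₁ x) → (∀ x, h₁ x ≤ h x) →
      ∃ c : ℝ, ∀ x, h₁ x = c * h x

/-- Vertices of the homogeneous tree `T_q`, modelled as pairs `(σ, k)` where
`σ : ℤ → ZMod q` is finitely supported with `σ n = 0` for `n > 0`. -/
structure TV (q : ℕ) where
  σ : ℤ → ZMod q
  k : ℤ
  fin : (Function.support σ).Finite
  upz : ∀ n : ℤ, 0 < n → σ n = 0

lemma fin_aux {q : ℕ} (g : ℤ → ZMod q) (hg : (Function.support g).Finite)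
    (f : ℤ → ℤ) (hf : Function.Injective f) :
    (Function.support fun n => if n ≤ 0 then g (f n) else 0).Finite := by
  refine Set.Finite.subset (hg.preimage hf.injOn) ?_
  intro n hn
  simp only [Function.mem_support] at hn
  by_cases hle : n ≤ 0
  · simp only [hle, if_true] at hn
    simpa [Set.mem_preimage, Function.mem_support] using hn
  · simp [hle] at hn

/-- The predecessor `x⁻` of a vertex of `T_q` (w.r.t. the reference end `ω`). -/
def pred {q : ℕ} (x : TV q) : TV q where
  σ := fun n => if n ≤ 0 then x.σ (n - 1) else 0
  k := x.k - 1
  fin := fin_aux x.σ x.fin (fun n => n - 1) sub_left_injective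
  upz := fun n hn => by simp [not_le.mpr hn]

/-- The vertex on the geodesic `ω o` at Busemann level `k` (zero configuration). -/
def rootAt (q : ℕ) (k : ℤ) : TV q := ⟨fun _ => 0, k, by simp, fun _ _ => rfl⟩

/-- The Diestel–Leader graph `DL(q,r)`. -/
def DL (q r : ℕ) := {x : TV q × TV r // x.1.k + x.2.k = 0}

/-- The root `o = o₁o₂` of `DL(q,r)`. -/
def oDL (q r : ℕ) : DL q r := ⟨(rootAt q 0, rootAt r 0), by simp [rootAt]⟩

/-- The projected transition matrix `P₁ = P_{1,α}` on `T_q`. -/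
def p1 (q : ℕ) (α : ℝ) (x y : TV q) : ℝ :=
  if pred y = x then α / (q : ℝ) else if y = pred x then 1 - α else 0

/-- The projected transition matrix `P₂ = P_{2,1-α}` on `T_r`. -/
def p2 (r : ℕ) (α : ℝ) (x y : TV r) : ℝ :=
  if y = pred x then α else if pred y = x then (1 - α) / (r : ℝ) else 0

/-- The transition matrix `P_α` on `DL(q,r)`. -/
def pDL (q r : ℕ) (α : ℝ) (x y : DL q r) : ℝ :=
  if pred y.val.1 = x.val.1 ∧ y.val.2 = pred x.val.2 then α / (q : ℝ)
  else if y.val.1 = pred x.val.1 ∧ pred y.val.2 = x.val.2 then (1 - α) / (r : ℝ)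
  else 0


/-- Ends `ξ ∈ ∂*T_q`: configurations whose support is bounded below. -/
def BoundedBelowSupp (q : ℕ) (ξ : ℤ → ZMod q) : Prop := ∃ N : ℤ, ∀ n < N, ξ n = 0

/-- Configurations whose support is bounded above. -/
def BoundedAboveSupp (q : ℕ) (ξ : ℤ → ZMod q) : Prop := ∃ N : ℤ, ∀ n > N, ξ n = 0

/-- The confluent level `b(x,ξ)` (level of `x ⋏ ξ` w.r.t. `ω`) of a vertex `x ∈ T_q`
and an end `ξ ∈ ∂*T_q`. -/
def bconf (q : ℕ) (x : TV q) (ξ : ℤ → ZMod q) : ℤ :=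
  sInf ({m : ℤ | m ≤ x.k ∧ ξ (m + 1) ≠ x.σ (m + 1 - x.k)} ∪ {x.k})

/-- `F₁⁻ = F₁(x,x⁻) = min {1, (1-α)/α}`. -/
def F1m (α : ℝ) : ℝ := min 1 ((1 - α) / α)
/-- `F₁⁺ = F₁(x⁻,x) = min {1/q, α/((1-α)q)}`. -/
def F1p (q : ℕ) (α : ℝ) : ℝ := min (1 / (q : ℝ)) (α / ((1 - α) * (q : ℝ)))
/-- `F₂⁻ = min {1, α/(1-α)}`. -/
def F2m (α : ℝ) : ℝ := min 1 (α / (1 - α))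
/-- `F₂⁺ = min {1/r, (1-α)/(αr)}`. -/
def F2p (r : ℕ) (α : ℝ) : ℝ := min (1 / (r : ℝ)) ((1 - α) / (α * (r : ℝ)))

/-- The Martin kernel `K₁(·,ξ₁)` on `T_q`, `ξ₁ ∈ ∂*T_q`. -/
def K1 (q : ℕ) (α : ℝ) (x : TV q) (ξ : ℤ → ZMod q) : ℝ :=
  F1m α ^ x.k * (F1m α * F1p q α) ^ (bconf q (rootAt q 0) ξ - bconf q x ξ)

/-- The Martin kernel `K₂(·,ξ₂)` on `T_r`, `ξ₂ ∈ ∂*T_r`. -/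
def K2 (r : ℕ) (α : ℝ) (x : TV r) (ξ : ℤ → ZMod r) : ℝ :=
  F2m α ^ x.k * (F2m α * F2p r α) ^ (bconf r (rootAt r 0) ξ - bconf r x ξ)

/-- The vertex `u_m = (σ_m, m)` on the geodesic from `ω` to the end encoded by `ξ`. -/
def rayVertex (q : ℕ) (ξ : ℤ → ZMod q) (hξ : BoundedBelowSupp q ξ) (m : ℤ) : TV q where
  σ := fun n => if n ≤ 0 then ξ (m + n) else 0
  k := m
  fin := by
    obtain ⟨N, hN⟩ := hξ
    apply Set.Finite.subset (Set.finite_Icc (N - m) 0)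
    intro n hn
    simp only [Function.mem_support] at hn
    by_cases hle : n ≤ 0
    · simp only [hle, if_true] at hn
      have : ¬ (m + n < N) := fun hc => hn (hN _ hc)
      exact Set.mem_Icc.mpr ⟨by omega, hle⟩
    · simp [hle] at hn
  upz := fun n hn => by simp [not_le.mpr hn]

/-- The rooted subtree `S₁ = S₁^{(n)} ⊆ T_q` with root `a₁ = (0,-n)`. -/
def S1 (q : ℕ) (n : ℕ) : Set (TV q) :=
  {x | -(n : ℤ) ≤ x.k ∧ x.k ≤ (n : ℤ) ∧ pred^[(x.k + (n : ℤ)).toNat] x = rootAt q (-(n : ℤ))}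

/-- The set of leaves `∂*S₁` of `S₁^{(n)}`. -/
def S1leaves (q : ℕ) (n : ℕ) : Set (TV q) := {x | x ∈ S1 q n ∧ x.k = (n : ℤ)}

/-- The boundary `∂S₁ = {a₁} ∪ ∂*S₁` of `S₁^{(n)}`. -/
def S1bd (q : ℕ) (n : ℕ) : Set (TV q) := insert (rootAt q (-(n : ℤ))) (S1leaves q n)

/-- The horocyclic product `S = S^{(n)}` of `S₁` and `S₂` inside `DL(q,r)`. -/
def Sdl (q r : ℕ) (n : ℕ) : Set (DL q r) := {x | x.val.1 ∈ S1 q n ∧ x.val.2 ∈ S1 r n}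

/-- The boundary `∂S = (∂*S₁ × {a₂}) ∪ ({a₁} × ∂*S₂)` of `S^{(n)}`. -/
def Sbd (q r : ℕ) (n : ℕ) : Set (DL q r) :=
  {x | (x.val.1 ∈ S1leaves q n ∧ x.val.2 = rootAt r (-(n : ℤ))) ∨
       (x.val.1 = rootAt q (-(n : ℤ)) ∧ x.val.2 ∈ S1leaves r n)}

/-- A leaf `y₁ ∈ ∂*S₁` together with `a₂` gives a vertex `y₁a₂` of `DL(q,r)`. -/
def liftLeaf1 (q r : ℕ) (n : ℕ) (y : TV q) (hy : y ∈ S1leaves q n) : DL q r :=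
  ⟨(y, rootAt r (-(n : ℤ))), by have h2 := hy.2; show y.k + (-(n : ℤ)) = 0; omega⟩

/-- The vertex `a₁y₂` of `DL(q,r)` for a leaf `y₂ ∈ ∂*S₂`. -/
def liftLeaf2 (q r : ℕ) (n : ℕ) (y : TV r) (hy : y ∈ S1leaves r n) : DL q r :=
  ⟨(rootAt q (-(n : ℤ)), y), by have h2 := hy.2; show (-(n : ℤ)) + y.k = 0; omega⟩



/-- Elements of the lamplighter group `Γ = ℤ_q ≀ ℤ`: pairs `(η,k)` with `η`
finitely supported. -/
structure LP (q : ℕ) where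
  η : ℤ → ZMod q
  k : ℤ
  fin : (Function.support η).Finite

/-- The identity element `e = (0,0)` of `ℤ_q ≀ ℤ`. -/
def eLP (q : ℕ) : LP q := ⟨fun _ => 0, 0, by simp⟩

/-- Multiplication in `ℤ_q ≀ ℤ`: `(η,k)(η',k') = (η + η'(· − k), k + k')`. -/
def lmul {q : ℕ} (g h : LP q) : LP q where
  η := fun n => g.η n + h.η (n - g.k)
  k := g.k + h.k
  fin := by
    have hinj : Function.Injective (fun n : ℤ => n - g.k) := sub_left_injective
    apply Set.Finite.subset (Set.Finite.union g.fin (h.fin.preimage hinj.injOn))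
    intro n hn
    simp only [Function.mem_support] at hn
    by_cases h1 : g.η n = 0
    · right
      simp only [Set.mem_preimage, Function.mem_support]
      intro h2
      exact hn (by rw [h1, h2, add_zero])
    · left; exact h1

/-- The configuration `δ_j^ℓ` with value `ℓ` at `j` and `0` elsewhere. -/
def deltaCfg (q : ℕ) (j : ℤ) (ℓ : ZMod q) : ℤ → ZMod q := fun n => if n = j then ℓ else 0

/-- The group element `(δ_j^ℓ, k) ∈ ℤ_q ≀ ℤ`. -/
def deltaLP (q : ℕ) (j : ℤ) (ℓ : ZMod q) (k : ℤ) : LP q :=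
  ⟨deltaCfg q j ℓ, k, by
    apply Set.Finite.subset (Set.finite_singleton j)
    intro n hn
    simp only [Function.mem_support, deltaCfg] at hn
    by_cases h : n = j
    · simpa using h
    · simp [h] at hn⟩


/-- Adjacency in the tree `T_q`: one vertex is the predecessor of the other. -/
def adjT {q : ℕ} (x y : TV q) : Prop := pred x = y ∨ pred y = x

/-- Adjacency in `DL(q,r)`. -/
def adjDL {q r : ℕ} (x y : DL q r) : Prop :=
  adjT x.val.1 y.val.1 ∧ adjT x.val.2 y.val.2

/-- The identification `Φ : ℤ_q ≀ ℤ → DL(q,q)`, `Φ(η,k) = (η_k⁻,k)(η_k⁺,-k)`. -/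
def Phi (q : ℕ) (g : LP q) : DL q q :=
  ⟨(⟨fun n => if n ≤ 0 then g.η (g.k + n) else 0, g.k,
      fin_aux g.η g.fin (fun n => g.k + n) (add_right_injective g.k),
      fun n hn => by simp [not_le.mpr hn]⟩,
    ⟨fun n => if n ≤ 0 then g.η (g.k + 1 - n) else 0, -g.k,
      fin_aux g.η g.fin (fun n => g.k + 1 - n) sub_right_injective,
      fun n hn => by simp [not_le.mpr hn]⟩),
   by show g.k + -g.k = 0; omega⟩

/-- The transition matrix `Q_α` of the switch–walk–switch walk on `DL^s(q,r)`. -/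
def qDL (q r : ℕ) (α : ℝ) (x y : DL q r) : ℝ :=
  if pred (pred y.val.1) = pred x.val.1 ∧ y.val.2 = pred x.val.2 then α / ((q : ℝ) ^ 2)
  else if pred y.val.1 = pred (pred x.val.1) ∧ pred y.val.2 = x.val.2 then
    (1 - α) / ((q : ℝ) * (r : ℝ))
  else 0

/-- The horocyclic product `D'` of `T_q` and `T_r` at level sum `-1`. -/
def DL' (q r : ℕ) := {x : TV q × TV r // x.1.k + x.2.k = -1}

/-- The transition matrix `P'` on `D'` (same rule as `P_α`). -/
def pDL' (q r : ℕ) (α : ℝ) (x y : DL' q r) : ℝ :=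
  if pred y.val.1 = x.val.1 ∧ y.val.2 = pred x.val.2 then α / (q : ℝ)
  else if y.val.1 = pred x.val.1 ∧ pred y.val.2 = x.val.2 then (1 - α) / (r : ℝ)
  else 0

/-- The map `x₁x₂ ↦ x₁⁻x₂` from `DL^s(q,r)` onto `D'`. -/
def toDL' {q r : ℕ} (x : DL q r) : DL' q r :=
  ⟨(pred x.val.1, x.val.2), by
    have h := x.property; show x.val.1.k - 1 + x.val.2.k = -1; omega⟩

/-- Harmonicity for the simple ("walk forward and switch, or switch and walk
backward") lamplighter walk on `ℤ_q ≀ ℤ`, whose law is uniform on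
`{(δ₁^ℓ,1), (δ₀^ℓ,-1) : ℓ ∈ ZMod q}`. -/
def SRWHarmonic (q : ℕ) [NeZero q] (h : LP q → ℝ) : Prop :=
  ∀ g : LP q,
    (∑ ℓ : ZMod q, (h (lmul g (deltaLP q 1 ℓ 1)) + h (lmul g (deltaLP q 0 ℓ (-1)))))
      / (2 * (q : ℝ)) = h g

/-- The step `(δ₀^ℓ + δ₁^m, 1)` of the switch–walk–switch walk. -/
def swsStepP (q : ℕ) (ℓ m : ZMod q) : LP q :=
  ⟨fun n => if n = 0 then ℓ else if n = 1 then m else 0, 1, by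
    apply Set.Finite.subset ((Set.finite_singleton 1).insert (0:ℤ))
    intro n hn
    simp only [Function.mem_support] at hn
    by_cases h0 : n = 0
    · simp [h0]
    · by_cases h1 : n = 1
      · simp [h1]
      · simp [h0, h1] at hn⟩

/-- The step `(δ₀^ℓ + δ_{-1}^m, -1)` of the switch–walk–switch walk. -/
def swsStepM (q : ℕ) (ℓ m : ZMod q) : LP q :=
  ⟨fun n => if n = 0 then ℓ else if n = -1 then m else 0, -1, by
    apply Set.Finite.subset ((Set.finite_singleton (-1:ℤ)).insert (0:ℤ))
    intro n hn
    simp only [Function.mem_support] at hn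
    by_cases h0 : n = 0
    · simp [h0]
    · by_cases h1 : n = (-1 : ℤ)
      · simp [h1]
      · simp [h0, h1] at hn⟩

/-- Harmonicity for the switch–walk–switch lamplighter walk on `ℤ_q ≀ ℤ`, whose law
is uniform on `{(δ₀^ℓ + δ₁^m, 1), (δ₀^ℓ + δ_{-1}^m, -1) : ℓ, m ∈ ZMod q}`. -/
def SWSHarmonic (q : ℕ) [NeZero q] (h : LP q → ℝ) : Prop :=
  ∀ g : LP q,
    (∑ ℓ : ZMod q, ∑ m : ZMod q,
        (h (lmul g (swsStepP q ℓ m)) + h (lmul g (swsStepM q ℓ m))))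
      / (2 * (q : ℝ) ^ 2) = h g

/-- The positive defect `df⁺((η,k),ξ₁)`. -/
def dfPlus (q : ℕ) (g : LP q) (ξ : ℤ → ZMod q) : ℤ :=
  sInf ({n : ℤ | n ≤ g.k ∧ ξ (n + 1) ≠ g.η (n + 1)} ∪ {g.k}) -
    sInf ({m : ℤ | m ≤ 0 ∧ ξ (m + 1) ≠ 0} ∪ {0})

/-- The negative defect `df⁻((η,k),ξ₂)`. -/
def dfMinus (q : ℕ) (g : LP q) (ξ : ℤ → ZMod q) : ℤ :=
  sSup ({m : ℤ | 0 < m ∧ ξ m ≠ 0} ∪ {0}) -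
    sSup ({n : ℤ | g.k < n ∧ ξ n ≠ g.η n} ∪ {g.k})

/-- The defect `df⊕((η,k),ξ₁)` for the switch–walk–switch walk. -/
def dfOPlus (q : ℕ) (g : LP q) (ξ : ℤ → ZMod q) : ℤ :=
  sInf ({n : ℤ | n ≤ g.k ∧ ξ n ≠ g.η n} ∪ {g.k}) -
    sInf ({m : ℤ | m ≤ 0 ∧ ξ m ≠ 0} ∪ {0})

/-! ### Auxiliary development for STATEMENT 6 -/

section Aux

lemma TV.ext' {q : ℕ} {x y : TV q} (hσ : x.σ = y.σ) (hk : x.k = y.k) : x = y := by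
  cases x; cases y; simp_all

@[simp] lemma pred_k {q : ℕ} (x : TV q) : (pred x).k = x.k - 1 := rfl

lemma pred_iter_k {q : ℕ} (x : TV q) : ∀ t : ℕ, (pred^[t] x).k = x.k - t := by
  intro t
  induction t with
  | zero => simp
  | succ t ih => rw [Function.iterate_succ_apply', pred_k, ih]; push_cast; ring

lemma pred_iter_σ {q : ℕ} (x : TV q) : ∀ t : ℕ, ∀ n : ℤ,
    (pred^[t] x).σ n = if n ≤ 0 then x.σ (n - t) else 0 := by
  intro t
  induction t with
  | zero =>
    intro n
    by_cases h : n ≤ 0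
    · simp [h]
    · simp [h, x.upz n (by omega)]
  | succ t ih =>
    intro n
    rw [Function.iterate_succ_apply']
    show (if n ≤ 0 then (pred^[t] x).σ (n - 1) else 0) = _
    by_cases h : n ≤ 0
    · rw [if_pos h, ih (n-1), if_pos (by omega), if_pos h]
      congr 1
      push_cast; ring
    · simp [h]

lemma pred_ne {q : ℕ} (x : TV q) : pred x ≠ x := by
  intro h
  have := congrArg TV.k h
  simp at this

/-- The `ℓ`-th child (successor) of a vertex. -/
def child {q : ℕ} (ℓ : ZMod q) (x : TV q) : TV q where
  σ := fun n => if n = 0 then ℓ else if n ≤ 0 then x.σ (n + 1) else 0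
  k := x.k + 1
  fin := by
    apply Set.Finite.subset (((x.fin.preimage (f := fun n : ℤ => n + 1)
      (add_left_injective 1).injOn)).union (Set.finite_singleton 0))
    intro n hn
    simp only [Function.mem_support] at hn
    by_cases h0 : n = 0
    · right; simp [h0]
    · by_cases h1 : n ≤ 0
      · left
        simp only [h0, if_false, h1, if_true] at hn
        simpa [Set.mem_preimage, Function.mem_support] using hn
      · simp [h0, h1] at hn
  upz := fun n hn => by
    have h0 : ¬ (n = 0) := by omega
    have h1 : ¬ (n ≤ 0) := by omega
    simp [h0, h1]

@[simp] lemma child_k {q : ℕ} (ℓ : ZMod q) (x : TV q) : (child ℓ x).k = x.k + 1 := rfl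

@[simp] lemma pred_child {q : ℕ} (ℓ : ZMod q) (x : TV q) : pred (child ℓ x) = x := by
  apply TV.ext'
  · funext n
    show (if n ≤ 0 then (child ℓ x).σ (n - 1) else 0) = x.σ n
    by_cases h : n ≤ 0
    · rw [if_pos h]
      show (if n - 1 = 0 then ℓ else if n - 1 ≤ 0 then x.σ (n - 1 + 1) else 0) = x.σ n
      rw [if_neg (by omega), if_pos (by omega)]
      congr 1; ring
    · rw [if_neg h]
      exact (x.upz n (by omega)).symm
  · show x.k + 1 - 1 = x.k; ring

lemma eq_child_of_pred_eq {q : ℕ} {y x : TV q} (h : pred y = x) : y = child (y.σ 0) x := by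
  subst h
  apply TV.ext'
  · funext n
    show y.σ n = if n = 0 then y.σ 0 else if n ≤ 0 then (pred y).σ (n + 1) else 0
    by_cases h0 : n = 0
    · rw [if_pos h0, h0]
    · by_cases h1 : n ≤ 0
      · rw [if_neg h0, if_pos h1]
        show y.σ n = if n + 1 ≤ 0 then y.σ (n + 1 - 1) else 0
        by_cases h2 : n + 1 ≤ 0
        · rw [if_pos h2]; congr 1; ring
        · omega
      · rw [if_neg h0, if_neg h1, y.upz n (by omega)]
  · show y.k = y.k - 1 + 1; ring

lemma child_inj {q : ℕ} {ℓ ℓ' : ZMod q} {x : TV q} (h : child ℓ x = child ℓ' x) : ℓ = ℓ' := by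
  have := congrArg (fun z : TV q => z.σ 0) h
  simpa [child] using this

lemma child_ne_pred {q : ℕ} (ℓ : ZMod q) (x : TV q) : child ℓ x ≠ pred x := by
  intro h
  have := congrArg TV.k h
  simp at this; omega

section P1Rows

variable {q : ℕ} {α : ℝ}

lemma pred_pred_ne {q : ℕ} (x : TV q) : pred (pred x) ≠ x := by
  intro h
  have := congrArg TV.k h
  simp only [pred_k] at this
  omega

lemma p1_apply_pred (x : TV q) : p1 q α x (pred x) = 1 - α := by
  unfold p1
  rw [if_neg (pred_pred_ne x), if_pos rfl]

lemma p1_apply_child (ℓ : ZMod q) (x : TV q) : p1 q α x (child ℓ x) = α / q := by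
  unfold p1
  rw [if_pos (pred_child ℓ x)]

lemma p1_eq_zero {x v : TV q} (h1 : v ≠ pred x) (h2 : pred v ≠ x) : p1 q α x v = 0 := by
  unfold p1
  rw [if_neg h2, if_neg h1]

/-- The finite set carrying the support of row `x` of `p1`. -/
def rowFinset (q : ℕ) [NeZero q] (x : TV q) : Finset (TV q) :=
  insert (pred x) (Finset.image (fun ℓ : ZMod q => child ℓ x) Finset.univ)

lemma p1_vanish_outside [NeZero q] (x : TV q) :
    ∀ v ∉ rowFinset q x, p1 q α x v = 0 := by
  intro v hv
  simp only [rowFinset, Finset.mem_insert, Finset.mem_image, Finset.mem_univ, true_and,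
    not_or, not_exists] at hv
  refine p1_eq_zero hv.1 ?_
  intro h
  exact hv.2 (v.σ 0) (eq_child_of_pred_eq h).symm

lemma p1_row_tsum [NeZero q] (x : TV q) (g : TV q → ℝ) :
    ∑' v, p1 q α x v * g v
      = (1 - α) * g (pred x) + (α / q) * ∑ ℓ : ZMod q, g (child ℓ x) := by
  rw [tsum_eq_sum (s := rowFinset q x)
    (fun v hv => by rw [p1_vanish_outside x v hv, zero_mul])]
  unfold rowFinset
  rw [Finset.sum_insert (by
    simp only [Finset.mem_image, Finset.mem_univ, true_and, not_exists]
    intro ℓ h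
    exact child_ne_pred ℓ x h)]
  rw [Finset.sum_image (fun ℓ _ ℓ' _ h => child_inj h)]
  rw [p1_apply_pred, Finset.mul_sum]
  congr 1
  exact Finset.sum_congr rfl fun ℓ _ => by rw [p1_apply_child]

lemma p1_stochastic (hq : 2 ≤ q) (hα0 : 0 < α) (hα1 : α < 1) :
    IsStochastic (p1 q α) := by
  haveI : NeZero q := ⟨by omega⟩
  have hqR : (0:ℝ) < (q:ℝ) := by exact_mod_cast (by omega : 0 < q)
  constructor
  · intro x y
    unfold p1
    have h1 : (0:ℝ) ≤ α / q := le_of_lt (div_pos hα0 hqR)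
    split_ifs <;> [exact h1; linarith; exact le_refl 0]
  · intro x
    have h := hasSum_sum_of_ne_finset_zero (s := rowFinset q x)
      (f := p1 q α x) (L := SummationFilter.unconditional _) (p1_vanish_outside x)
    have hsum : ∑ v ∈ rowFinset q x, p1 q α x v = 1 := by
      unfold rowFinset
      rw [Finset.sum_insert (by
        simp only [Finset.mem_image, Finset.mem_univ, true_and, not_exists]
        intro ℓ h
        exact child_ne_pred ℓ x h)]
      rw [Finset.sum_image (fun ℓ _ ℓ' _ h => child_inj h), p1_apply_pred]
      have : ∀ ℓ : ZMod q, p1 q α x (child ℓ x) = α / q := fun ℓ => p1_apply_child ℓ x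
      rw [Finset.sum_congr rfl fun ℓ _ => this ℓ, Finset.sum_const]
      have hcard : (Finset.univ : Finset (ZMod q)).card = q := by
        simpa using ZMod.card q
      rw [hcard, nsmul_eq_mul]
      field_simp
      ring
    rwa [hsum] at h

end P1Rows

section HitBasics

variable {p : X → X → ℝ}

lemma hb_zero (A : Set X) (y x : X) :
    hitBefore p A y 0 x = if x = y then 1 else 0 := rfl

lemma hb_succ (A : Set X) (y x : X) (n : ℕ) :
    hitBefore p A y (n+1) x
      = if x ∈ A then 0 else ∑' v, p x v * hitBefore p A y n v := rfl

lemma hb_nonneg (hp : IsStochastic p) (A : Set X) (y : X) :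
    ∀ n x, 0 ≤ hitBefore p A y n x := by
  intro n
  induction n with
  | zero => intro x; rw [hb_zero]; split_ifs <;> norm_num
  | succ n ih =>
    intro x
    rw [hb_succ]
    split_ifs with h
    · exact le_refl 0
    · exact tsum_nonneg fun v => mul_nonneg (hp.1 x v) (ih v)

lemma row_tsum_eq_sum (hfin : ∀ x, {v | p x v ≠ 0}.Finite) (x : X) (g : X → ℝ) :
    ∑' v, p x v * g v = ∑ v ∈ (hfin x).toFinset, p x v * g v := by
  refine tsum_eq_sum fun v hv => ?_
  have : p x v = 0 := by
    by_contra h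
    exact hv ((hfin x).mem_toFinset.mpr h)
  rw [this, zero_mul]

lemma sum_range_hb_le_one (hp : IsStochastic p) (hfin : ∀ x, {v | p x v ≠ 0}.Finite)
    {A : Set X} {y : X} (hyA : y ∈ A) :
    ∀ N x, ∑ n ∈ Finset.range N, hitBefore p A y n x ≤ 1 := by
  intro N
  induction N with
  | zero => intro x; simp
  | succ N ih =>
    intro x
    rw [Finset.sum_range_succ']
    by_cases hxA : x ∈ A
    · have hz : ∀ n, hitBefore p A y (n+1) x = 0 := fun n => by rw [hb_succ, if_pos hxA]
      rw [Finset.sum_congr rfl fun n _ => hz n, Finset.sum_const, smul_zero, zero_add, hb_zero]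
      split_ifs <;> norm_num
    · have hxy : x ≠ y := fun h => hxA (h ▸ hyA)
      rw [hb_zero, if_neg hxy, add_zero]
      have hrw : ∀ n, hitBefore p A y (n+1) x
          = ∑ v ∈ (hfin x).toFinset, p x v * hitBefore p A y n v := fun n => by
        rw [hb_succ, if_neg hxA, row_tsum_eq_sum hfin]
      rw [Finset.sum_congr rfl fun n _ => hrw n, Finset.sum_comm]
      have : ∀ v ∈ (hfin x).toFinset,
          ∑ n ∈ Finset.range N, p x v * hitBefore p A y n v ≤ p x v := by
        intro v _
        rw [← Finset.mul_sum]
        calc p x v * ∑ n ∈ Finset.range N, hitBefore p A y n v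
            ≤ p x v * 1 := by
              exact mul_le_mul_of_nonneg_left (ih v) (hp.1 x v)
          _ = p x v := mul_one _
      calc ∑ v ∈ (hfin x).toFinset, ∑ n ∈ Finset.range N, p x v * hitBefore p A y n v
          ≤ ∑ v ∈ (hfin x).toFinset, p x v := Finset.sum_le_sum this
        _ ≤ ∑' v, p x v := Summable.sum_le_tsum _ (fun v _ => hp.1 x v) (hp.2 x).summable
        _ = 1 := (hp.2 x).tsum_eq

lemma hb_summable (hp : IsStochastic p) (hfin : ∀ x, {v | p x v ≠ 0}.Finite)
    {A : Set X} {y : X} (hyA : y ∈ A) (x : X) :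
    Summable fun n => hitBefore p A y n x :=
  summable_of_sum_range_le (fun n => hb_nonneg hp A y n x)
    (fun N => sum_range_hb_le_one hp hfin hyA N x)

lemma FA_nonneg (hp : IsStochastic p) (A : Set X) (x y : X) : 0 ≤ FA p A x y :=
  tsum_nonneg fun n => hb_nonneg hp A y n x

lemma FA_le_one (hp : IsStochastic p) (hfin : ∀ x, {v | p x v ≠ 0}.Finite)
    {A : Set X} {y : X} (hyA : y ∈ A) (x : X) : FA p A x y ≤ 1 :=
  Real.tsum_le_of_sum_range_le (fun n => hb_nonneg hp A y n x)
    (fun N => sum_range_hb_le_one hp hfin hyA N x)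

lemma Fhit_nonneg (hp : IsStochastic p) (x y : X) : 0 ≤ Fhit p x y :=
  FA_nonneg hp {y} x y

lemma Fhit_le_one (hp : IsStochastic p) (hfin : ∀ x, {v | p x v ≠ 0}.Finite) (x y : X) :
    Fhit p x y ≤ 1 :=
  FA_le_one hp hfin (Set.mem_singleton y) x

lemma Fhit_self (p : X → X → ℝ) (z : X) : Fhit p z z = 1 := by
  unfold Fhit FA
  rw [tsum_eq_single 0]
  · rw [hb_zero, if_pos rfl]
  · intro n hn
    obtain ⟨m, rfl⟩ := Nat.exists_eq_succ_of_ne_zero hn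
    rw [hb_succ, if_pos (Set.mem_singleton z)]

lemma Fhit_summable (hp : IsStochastic p) (hfin : ∀ x, {v | p x v ≠ 0}.Finite) (x z : X) :
    Summable fun n => hitBefore p {z} z n x :=
  hb_summable hp hfin (Set.mem_singleton z) x

lemma Fhit_step (hp : IsStochastic p) (hfin : ∀ x, {v | p x v ≠ 0}.Finite)
    {x z : X} (hxz : x ≠ z) :
    Fhit p x z = ∑' v, p x v * Fhit p v z := by
  unfold Fhit FA
  rw [Summable.tsum_eq_zero_add (Fhit_summable hp hfin x z), hb_zero, if_neg hxz, zero_add]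
  have hrw : ∀ n : ℕ, hitBefore p {z} z (n+1) x
      = ∑ v ∈ (hfin x).toFinset, p x v * hitBefore p {z} z n v := fun n => by
    rw [hb_succ, if_neg (by simpa using hxz), row_tsum_eq_sum hfin]
  rw [tsum_congr hrw, Summable.tsum_finsetSum
    (fun v _ => ((Fhit_summable hp hfin v z).mul_left (p x v)))]
  rw [row_tsum_eq_sum hfin]
  exact Finset.sum_congr rfl fun v _ => by
    rw [tsum_mul_left]

end HitBasics

section SepSection

variable {p : X → X → ℝ}

/-- `y` is a gate separating `C` from `z`. -/
def Sep (p : X → X → ℝ) (C : Set X) (y z : X) : Prop :=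
  y ∈ C ∧ z ∉ C ∧ ∀ w ∈ C, w ≠ y → ∀ v, p w v ≠ 0 → v ∈ C

lemma hb_conv (hp : IsStochastic p) (hfin : ∀ x, {v | p x v ≠ 0}.Finite)
    {C : Set X} {y z : X} (hC : Sep p C y z) :
    ∀ n, ∀ w ∈ C, hitBefore p {z} z n w =
      ∑ j ∈ Finset.range (n+1),
        hitBefore p {y} y j w * hitBefore p {z} z (n - j) y := by
  have hyz : y ≠ z := fun h => hC.2.1 (h ▸ hC.1)
  intro n
  induction n with
  | zero =>
    intro w hw
    have hwz : w ≠ z := fun h => hC.2.1 (h ▸ hw)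
    have h1 : hitBefore p {z} z 0 y = 0 := by rw [hb_zero, if_neg hyz]
    have h2 : hitBefore p {z} z 0 w = 0 := by rw [hb_zero, if_neg hwz]
    simp [h1, h2]
  | succ n ih =>
    intro w hw
    have hwz : w ≠ z := fun h => hC.2.1 (h ▸ hw)
    by_cases hwy : w = y
    · subst hwy
      rw [Finset.sum_eq_single 0]
      · rw [hb_zero, if_pos rfl, one_mul, Nat.sub_zero]
      · intro j _ hj
        obtain ⟨m, rfl⟩ := Nat.exists_eq_succ_of_ne_zero hj
        rw [hb_succ, if_pos (Set.mem_singleton _), zero_mul]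
      · intro h
        exact absurd (Finset.mem_range.mpr (Nat.succ_pos _)) h
    · rw [hb_succ, if_neg (by simpa using hwz), row_tsum_eq_sum hfin]
      have hstep : ∀ v ∈ (hfin w).toFinset,
          p w v * hitBefore p {z} z n v
            = p w v * ∑ j ∈ Finset.range (n+1),
                hitBefore p {y} y j v * hitBefore p {z} z (n - j) y := by
        intro v hv
        by_cases hpv : p w v = 0
        · rw [hpv, zero_mul, zero_mul]
        · rw [ih v (hC.2.2 w hw hwy v hpv)]
      rw [Finset.sum_congr rfl hstep]
      have hswap : ∑ v ∈ (hfin w).toFinset, p w v * ∑ j ∈ Finset.range (n+1),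
            hitBefore p {y} y j v * hitBefore p {z} z (n - j) y
          = ∑ j ∈ Finset.range (n+1),
              (∑ v ∈ (hfin w).toFinset, p w v * hitBefore p {y} y j v)
                * hitBefore p {z} z (n - j) y := by
        simp_rw [Finset.mul_sum]
        rw [Finset.sum_comm]
        refine Finset.sum_congr rfl fun j _ => ?_
        rw [Finset.sum_mul]
        exact Finset.sum_congr rfl fun v _ => (mul_assoc _ _ _).symm
      rw [hswap]
      have hfw : ∀ j, ∑ v ∈ (hfin w).toFinset, p w v * hitBefore p {y} y j v
          = hitBefore p {y} y (j+1) w := by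
        intro j
        rw [hb_succ, if_neg (by simpa using hwy), row_tsum_eq_sum hfin]
      rw [Finset.sum_congr rfl fun j _ => by rw [hfw j]]
      rw [Finset.sum_range_succ' (fun j => hitBefore p {y} y j w
        * hitBefore p {z} z (n + 1 - j) y) (n+1)]
      rw [hb_zero, if_neg hwy, zero_mul, add_zero]
      exact Finset.sum_congr rfl fun j _ => by rw [Nat.succ_sub_succ]

lemma Fhit_mul (hp : IsStochastic p) (hfin : ∀ x, {v | p x v ≠ 0}.Finite)
    {C : Set X} {y z : X} (hC : Sep p C y z) {x : X} (hx : x ∈ C) :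
    Fhit p x z = Fhit p x y * Fhit p y z := by
  have hf := Fhit_summable hp hfin x y
  have hg := Fhit_summable hp hfin y z
  have hf' : Summable fun n => ‖hitBefore p {y} y n x‖ := by
    refine hf.congr fun n => ?_
    rw [Real.norm_of_nonneg (hb_nonneg hp _ _ _ _)]
  have hg' : Summable fun n => ‖hitBefore p {z} z n y‖ := by
    refine hg.congr fun n => ?_
    rw [Real.norm_of_nonneg (hb_nonneg hp _ _ _ _)]
  have hcauchy := tsum_mul_tsum_eq_tsum_sum_range_of_summable_norm hf' hg'
  unfold Fhit FA
  rw [hcauchy]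
  refine tsum_congr fun n => ?_
  rw [hb_conv hp hfin hC n x hx]

end SepSection

section TreeSep

variable {q : ℕ} {α : ℝ}

/-- `w` is a descendant of `a` (or equal to it). -/
def Desc {q : ℕ} (w a : TV q) : Prop := ∃ i : ℕ, pred^[i] w = a

lemma desc_self {q : ℕ} (a : TV q) : Desc a a := ⟨0, rfl⟩

lemma Desc.k_le {w a : TV q} (h : Desc w a) : a.k ≤ w.k := by
  obtain ⟨i, rfl⟩ := h
  rw [pred_iter_k]
  omega

lemma Desc.eq_of_k_le {w a : TV q} (h : Desc w a) (hk : w.k ≤ a.k) : w = a := by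
  obtain ⟨i, rfl⟩ := h
  rw [pred_iter_k] at hk
  have : i = 0 := by omega
  rw [this]
  rfl

lemma not_desc_of_k_lt {w a : TV q} (h : w.k < a.k) : ¬ Desc w a :=
  fun hd => absurd hd.k_le (by omega)

lemma desc_level_determined {w a : TV q} {t : ℕ} (h : pred^[t] w = a) :
    t = (w.k - a.k).toNat := by
  have := congrArg TV.k h
  rw [pred_iter_k] at this
  omega

lemma p1_move {w v : TV q} (h : p1 q α w v ≠ 0) : v = pred w ∨ pred v = w := by
  unfold p1 at h
  split_ifs at h with h1 h2
  · exact Or.inr h1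
  · exact Or.inl h2
  · exact absurd rfl h

lemma sep_desc (a : TV q) : Sep (p1 q α) {w : TV q | Desc w a} a (pred a) := by
  refine ⟨desc_self a, ?_, ?_⟩
  · intro h
    have := Desc.k_le (show Desc (pred a) a from h)
    simp only [pred_k] at this
    omega
  · intro w hw hwa v hv
    obtain ⟨i, hi⟩ := hw
    rcases p1_move hv with h | h
    · subst h
      obtain ⟨j, rfl⟩ : ∃ j, i = j + 1 := by
        rcases i with _ | j
        · exact absurd hi hwa
        · exact ⟨j, rfl⟩
      exact ⟨j, by rw [← Function.iterate_succ_apply]; exact hi⟩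
    · exact ⟨i + 1, by rw [Function.iterate_succ_apply, h]; exact hi⟩

lemma sep_nondesc (y₀ : TV q) : Sep (p1 q α) {w : TV q | ¬ Desc w y₀} (pred y₀) y₀ := by
  refine ⟨?_, by simp [desc_self], ?_⟩
  · intro h
    have := (h : Desc (pred y₀) y₀).k_le
    simp only [pred_k] at this
    omega
  · intro w hw hwp v hv
    rcases p1_move hv with h | h
    · subst h
      intro hd
      obtain ⟨i, hi⟩ := hd
      exact hw ⟨i + 1, by rw [Function.iterate_succ_apply]; exact hi⟩
    · intro hd
      obtain ⟨i, hi⟩ := hd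
      rcases i with _ | j
      · exact hwp (by rw [← hi]; exact congrArg pred rfl ▸ (by rw [← h]; rfl))
      · exact hw ⟨j, by rw [Function.iterate_succ_apply, h] at hi; exact hi⟩

lemma sep_confl {c₁ c y₀ : TV q} (hc : pred c₁ = c) (hny : ¬ Desc y₀ c₁) (hyc : y₀ ≠ c) :
    Sep (p1 q α) ({w : TV q | Desc w c₁} ∪ {c}) c y₀ := by
  refine ⟨Or.inr rfl, ?_, ?_⟩
  · intro h
    rcases h with h | h
    · exact hny h
    · exact hyc h
  · intro w hw hwc v hv
    have hwd : Desc w c₁ := by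
      rcases hw with h | h
      · exact h
      · exact absurd h hwc
    obtain ⟨i, hi⟩ := hwd
    rcases p1_move hv with h | h
    · subst h
      rcases i with _ | j
      · refine Set.mem_union_right _ ?_
        have hwc1 : w = c₁ := hi
        rw [hwc1, hc]
        rfl
      · exact Set.mem_union_left _
          ⟨j, by rw [← Function.iterate_succ_apply]; exact hi⟩
    · exact Set.mem_union_left _
        ⟨i + 1, by rw [Function.iterate_succ_apply, h]; exact hi⟩

lemma p1_hfin (q : ℕ) [NeZero q] (α : ℝ) : ∀ x : TV q, {v | p1 q α x v ≠ 0}.Finite := by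
  intro x
  refine Set.Finite.subset (rowFinset q x).finite_toSet ?_
  intro v hv
  by_contra h
  exact hv (p1_vanish_outside x v (by simpa using h))

end TreeSep

section Superharmonic

variable {p : X → X → ℝ}

lemma Fhit_le_superharmonic (hp : IsStochastic p) (hfin : ∀ x, {v | p x v ≠ 0}.Finite)
    {z : X} {φ : X → ℝ} (hφ0 : ∀ x, 0 ≤ φ x) (hφz : 1 ≤ φ z)
    (hsup : ∀ x, x ≠ z → ∑' v, p x v * φ v ≤ φ x) :
    ∀ x, Fhit p x z ≤ φ x := by
  have key : ∀ N x, ∑ n ∈ Finset.range N, hitBefore p {z} z n x ≤ φ x := by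
    intro N
    induction N with
    | zero => intro x; simpa using hφ0 x
    | succ N ih =>
      intro x
      rw [Finset.sum_range_succ']
      by_cases hxz : x = z
      · subst hxz
        have hz : ∀ n, hitBefore p {x} x (n+1) x = 0 := fun n => by
          rw [hb_succ, if_pos (Set.mem_singleton x)]
        rw [Finset.sum_congr rfl fun n _ => hz n, Finset.sum_const, smul_zero, zero_add,
          hb_zero, if_pos rfl]
        exact hφz
      · rw [hb_zero, if_neg hxz, add_zero]
        have hrw : ∀ n, hitBefore p {z} z (n+1) x
            = ∑ v ∈ (hfin x).toFinset, p x v * hitBefore p {z} z n v := fun n => by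
          rw [hb_succ, if_neg (by simpa using hxz), row_tsum_eq_sum hfin]
        rw [Finset.sum_congr rfl fun n _ => hrw n, Finset.sum_comm]
        calc ∑ v ∈ (hfin x).toFinset, ∑ n ∈ Finset.range N, p x v * hitBefore p {z} z n v
            ≤ ∑ v ∈ (hfin x).toFinset, p x v * φ v := by
              refine Finset.sum_le_sum fun v _ => ?_
              rw [← Finset.mul_sum]
              exact mul_le_mul_of_nonneg_left (ih v) (hp.1 x v)
          _ = ∑' v, p x v * φ v := (row_tsum_eq_sum hfin x φ).symm
          _ ≤ φ x := hsup x hxz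
  intro x
  exact Real.tsum_le_of_sum_range_le (fun n => hb_nonneg hp _ _ n x) (fun N => key N x)

end Superharmonic

section Consts

variable {q : ℕ} {α : ℝ}

lemma F1m_pos (hα0 : 0 < α) (hα1 : α < 1) : 0 < F1m α :=
  lt_min one_pos (div_pos (by linarith) hα0)

lemma F1m_le_one : F1m α ≤ 1 := min_le_left _ _

lemma F1p_pos (hq : 2 ≤ q) (hα0 : 0 < α) (hα1 : α < 1) : 0 < F1p q α := by
  have hqR : (0:ℝ) < q := by exact_mod_cast (by omega : 0 < q)
  exact lt_min (by positivity) (div_pos hα0 (by nlinarith))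

lemma Q1 (hα0 : 0 < α) (hα1 : α < 1) : (1 - α) + α * F1m α ^ 2 = F1m α := by
  rcases le_or_gt α (1/2) with h | h
  · have hm : F1m α = 1 := min_eq_left (by rw [le_div_iff₀ hα0]; linarith)
    rw [hm]; ring
  · have hm : F1m α = (1 - α) / α := min_eq_right (by rw [div_le_one hα0]; linarith)
    rw [hm]
    field_simp
    ring

lemma Q2 (hq : 2 ≤ q) (hα0 : 0 < α) (hα1 : α < 1) :
    α / q + ((q : ℝ) - 1) * (α / q) * (F1m α * F1p q α) + (1 - α) * F1p q α ^ 2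
      = F1p q α := by
  have hqR : (0:ℝ) < q := by exact_mod_cast (by omega : 0 < q)
  have h1α : (0:ℝ) < 1 - α := by linarith
  rcases le_or_gt α (1/2) with h | h
  · have hm : F1m α = 1 := min_eq_left (by rw [le_div_iff₀ hα0]; linarith)
    have hp' : F1p q α = α / ((1 - α) * q) := by
      refine min_eq_right ?_
      rw [div_le_div_iff₀ (by positivity) hqR]
      nlinarith
    rw [hm, hp']
    field_simp
    ring
  · have hm : F1m α = (1 - α) / α := min_eq_right (by rw [div_le_one hα0]; linarith)
    have hp' : F1p q α = 1 / q := by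
      refine min_eq_left ?_
      rw [div_le_div_iff₀ hqR (by positivity)]
      nlinarith
    rw [hm, hp']
    field_simp
    ring

end Consts

section BconfLemmas

variable {q : ℕ}

/-- The set of "disagreement levels" whose `sInf` (together with `x.k`) is `bconf`. -/
def Sconf (q : ℕ) (x : TV q) (ξ : ℤ → ZMod q) : Set ℤ :=
  {m : ℤ | m ≤ x.k ∧ ξ (m + 1) ≠ x.σ (m + 1 - x.k)}

lemma bconf_eq (x : TV q) (ξ : ℤ → ZMod q) :
    bconf q x ξ = sInf (Sconf q x ξ ∪ {x.k}) := rfl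

lemma exists_supp_lb (f : ℤ → ZMod q) (hf : (Function.support f).Finite) :
    ∃ B : ℤ, ∀ t, t < B → f t = 0 := by
  obtain ⟨B, hB⟩ := hf.bddBelow
  refine ⟨B, fun t ht => ?_⟩
  by_contra h
  exact absurd (hB (Function.mem_support.mpr h)) (by omega)

lemma bconf_bddBelow (x : TV q) {ξ : ℤ → ZMod q} (hξ : BoundedBelowSupp q ξ) :
    BddBelow (Sconf q x ξ ∪ {x.k}) := by
  obtain ⟨N, hN⟩ := hξ
  obtain ⟨B, hB⟩ := exists_supp_lb x.σ x.fin
  refine ⟨min (min (N - 1) (B + x.k - 1)) x.k, fun m hm => ?_⟩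
  rcases hm with hm | hm
  · by_contra h
    push_neg at h
    have h1 : ξ (m + 1) = 0 := hN _ (by omega)
    have h2 : x.σ (m + 1 - x.k) = 0 := hB _ (by omega)
    exact hm.2 (by rw [h1, h2])
  · have : m = x.k := hm
    omega

lemma bconf_nonempty (x : TV q) (ξ : ℤ → ZMod q) :
    (Sconf q x ξ ∪ {x.k}).Nonempty := ⟨x.k, Or.inr rfl⟩

lemma bconf_mem (x : TV q) {ξ : ℤ → ZMod q} (hξ : BoundedBelowSupp q ξ) :
    bconf q x ξ ∈ Sconf q x ξ ∪ {x.k} :=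
  Int.csInf_mem (bconf_nonempty x ξ) (bconf_bddBelow x hξ)

lemma bconf_le_k (x : TV q) {ξ : ℤ → ZMod q} (hξ : BoundedBelowSupp q ξ) :
    bconf q x ξ ≤ x.k :=
  csInf_le (bconf_bddBelow x hξ) (Or.inr rfl)

lemma bconf_le_of_mem (x : TV q) {ξ : ℤ → ZMod q} (hξ : BoundedBelowSupp q ξ)
    {m : ℤ} (hm : m ∈ Sconf q x ξ ∪ {x.k}) : bconf q x ξ ≤ m :=
  csInf_le (bconf_bddBelow x hξ) hm

lemma le_bconf (x : TV q) (ξ : ℤ → ZMod q) {B : ℤ}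
    (hall : ∀ m ∈ Sconf q x ξ ∪ {x.k}, B ≤ m) : B ≤ bconf q x ξ :=
  le_csInf (bconf_nonempty x ξ) hall

lemma agree_of_lt_bconf (x : TV q) {ξ : ℤ → ZMod q} (hξ : BoundedBelowSupp q ξ)
    {m : ℤ} (hm : m < bconf q x ξ) : ξ (m + 1) = x.σ (m + 1 - x.k) := by
  by_contra h
  have hmem : m ∈ Sconf q x ξ :=
    ⟨by have := bconf_le_k x hξ; omega, h⟩
  exact absurd (bconf_le_of_mem x hξ (Or.inl hmem)) (not_le.mpr hm)

lemma pred_σ_eval (x : TV q) (n : ℤ) :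
    (pred x).σ n = if n ≤ 0 then x.σ (n - 1) else 0 := rfl

lemma child_σ_eval (ℓ : ZMod q) (x : TV q) (n : ℤ) :
    (child ℓ x).σ n = if n = 0 then ℓ else if n ≤ 0 then x.σ (n + 1) else 0 := rfl

lemma sconf_pred_iff {x : TV q} {ξ : ℤ → ZMod q} {m : ℤ} (hm : m ≤ x.k - 2) :
    m ∈ Sconf q (pred x) ξ ↔ m ∈ Sconf q x ξ := by
  unfold Sconf
  have hk : (pred x).k = x.k - 1 := rfl
  have hσ : (pred x).σ (m + 1 - (x.k - 1)) = x.σ (m + 1 - x.k) := by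
    rw [pred_σ_eval, if_pos (by omega)]
    congr 1
    ring
  simp only [Set.mem_setOf_eq, hk, hσ]
  constructor
  · rintro ⟨_, h⟩; exact ⟨by omega, h⟩
  · rintro ⟨_, h⟩; exact ⟨by omega, h⟩

lemma sconf_child_iff {x : TV q} {ξ : ℤ → ZMod q} {ℓ : ZMod q} {m : ℤ} (hm : m ≤ x.k - 1) :
    m ∈ Sconf q (child ℓ x) ξ ↔ m ∈ Sconf q x ξ := by
  unfold Sconf
  have hk : (child ℓ x).k = x.k + 1 := rfl
  have hσ : (child ℓ x).σ (m + 1 - (x.k + 1)) = x.σ (m + 1 - x.k) := by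
    rw [child_σ_eval, if_neg (by omega), if_pos (by omega)]
    congr 1
    ring
  simp only [Set.mem_setOf_eq, hk, hσ]
  constructor
  · rintro ⟨_, h⟩; exact ⟨by omega, h⟩
  · rintro ⟨_, h⟩; exact ⟨by omega, h⟩

lemma bconf_pred (x : TV q) {ξ : ℤ → ZMod q} (hξ : BoundedBelowSupp q ξ) :
    bconf q (pred x) ξ = min (bconf q x ξ) (x.k - 1) := by
  have hk : (pred x).k = x.k - 1 := rfl
  rcases le_or_gt (x.k - 1) (bconf q x ξ) with hb | hb
  · rw [min_eq_right hb]
    refine le_antisymm ?_ ?_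
    · have := bconf_le_k (pred x) hξ
      omega
    · refine le_bconf _ _ fun m hm => ?_
      rcases hm with hm | hm
      · by_contra hlt
        push_neg at hlt
        have hm2 : m ≤ x.k - 2 := by omega
        have : m ∈ Sconf q x ξ := (sconf_pred_iff hm2).mp hm
        have := bconf_le_of_mem x hξ (Or.inl this)
        omega
      · have : m = (pred x).k := hm
        omega
  · rw [min_eq_left (by omega)]
    have hmem : bconf q x ξ ∈ Sconf q x ξ := by
      rcases bconf_mem x hξ with h | h
      · exact h
      · have : bconf q x ξ = x.k := h
        omega
    refine le_antisymm ?_ ?_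
    · exact bconf_le_of_mem (pred x) hξ
        (Or.inl ((sconf_pred_iff (by omega)).mpr hmem))
    · refine le_bconf _ _ fun m hm => ?_
      rcases hm with hm | hm
      · rcases le_or_gt m (x.k - 2) with h2 | h2
        · exact bconf_le_of_mem x hξ (Or.inl ((sconf_pred_iff h2).mp hm))
        · omega
      · have : m = (pred x).k := hm
        omega

lemma bconf_child_of_lt {x : TV q} {ξ : ℤ → ZMod q} (hξ : BoundedBelowSupp q ξ)
    (ℓ : ZMod q) (hb : bconf q x ξ < x.k) :
    bconf q (child ℓ x) ξ = bconf q x ξ := by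
  have hk : (child ℓ x).k = x.k + 1 := rfl
  have hmem : bconf q x ξ ∈ Sconf q x ξ := by
    rcases bconf_mem x hξ with h | h
    · exact h
    · have : bconf q x ξ = x.k := h
      omega
  refine le_antisymm ?_ ?_
  · exact bconf_le_of_mem (child ℓ x) hξ
      (Or.inl ((sconf_child_iff (by omega)).mpr hmem))
  · refine le_bconf _ _ fun m hm => ?_
    rcases hm with hm | hm
    · rcases le_or_gt m (x.k - 1) with h2 | h2
      · exact bconf_le_of_mem x hξ (Or.inl ((sconf_child_iff h2).mp hm))
      · have := bconf_le_k x hξ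
        omega
    · have : m = (child ℓ x).k := hm
      have := bconf_le_k x hξ
      omega

lemma bconf_child_of_eq_ne {x : TV q} {ξ : ℤ → ZMod q} (hξ : BoundedBelowSupp q ξ)
    {ℓ : ZMod q} (hb : bconf q x ξ = x.k) (hne : ξ (x.k + 1) ≠ ℓ) :
    bconf q (child ℓ x) ξ = x.k := by
  have hk : (child ℓ x).k = x.k + 1 := rfl
  have hmem : x.k ∈ Sconf q (child ℓ x) ξ := by
    refine ⟨by omega, ?_⟩
    rw [hk]
    have : x.k + 1 - (x.k + 1) = (0 : ℤ) := by ring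
    rw [this, child_σ_eval, if_pos rfl]
    exact hne
  refine le_antisymm (bconf_le_of_mem (child ℓ x) hξ (Or.inl hmem)) ?_
  refine le_bconf _ _ fun m hm => ?_
  rcases hm with hm | hm
  · rcases le_or_gt m (x.k - 1) with h2 | h2
    · have := bconf_le_of_mem x hξ (Or.inl ((sconf_child_iff h2).mp hm))
      omega
    · omega
  · have : m = (child ℓ x).k := hm
    omega

lemma bconf_child_of_eq_eq {x : TV q} {ξ : ℤ → ZMod q} (hξ : BoundedBelowSupp q ξ)
    {ℓ : ZMod q} (hb : bconf q x ξ = x.k) (heq : ξ (x.k + 1) = ℓ) :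
    bconf q (child ℓ x) ξ = x.k + 1 := by
  have hk : (child ℓ x).k = x.k + 1 := rfl
  refine le_antisymm (by have := bconf_le_k (child ℓ x) hξ; omega) ?_
  refine le_bconf _ _ fun m hm => ?_
  rcases hm with hm | hm
  · rcases le_or_gt m (x.k - 1) with h2 | h2
    · have := bconf_le_of_mem x hξ (Or.inl ((sconf_child_iff h2).mp hm))
      omega
    · rcases le_or_gt m x.k with h3 | h3
      · exfalso
        have hmk : m = x.k := by omega
        have : (child ℓ x).σ (m + 1 - (child ℓ x).k) = ℓ := by
          rw [hk, hmk]
          have : x.k + 1 - (x.k + 1) = (0 : ℤ) := by ring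
          rw [this, child_σ_eval, if_pos rfl]
        exact hm.2 (by rw [this, hmk, heq])
      · have := hm.1
        rw [hk] at this
        omega
  · have : m = (child ℓ x).k := hm
    omega

end BconfLemmas

section EdgeUpper

variable {q : ℕ} {α : ℝ}

instance instNonemptyTV (q : ℕ) : Nonempty (TV q) := ⟨rootAt q 0⟩

lemma zpow_rec_down (hα0 : 0 < α) (hα1 : α < 1) (t : ℤ) :
    (1 - α) * F1m α ^ (t - 1) + α * F1m α ^ (t + 1) = F1m α ^ t := by
  have hβ : F1m α ≠ 0 := ne_of_gt (F1m_pos hα0 hα1)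
  have h1 : F1m α ^ (t + 1) = F1m α ^ (t - 1) * F1m α ^ (2 : ℕ) := by
    rw [← zpow_natCast (F1m α) 2, ← zpow_add₀ hβ]
    congr 1
    ring
  have h2 : F1m α ^ t = F1m α ^ (t - 1) * F1m α := by
    rw [← zpow_add_one₀ hβ]
    congr 1
    ring
  rw [h1, h2]
  calc (1 - α) * F1m α ^ (t - 1) + α * (F1m α ^ (t - 1) * F1m α ^ (2:ℕ))
      = F1m α ^ (t - 1) * ((1 - α) + α * F1m α ^ (2:ℕ)) := by ring
    _ = F1m α ^ (t - 1) * F1m α := by rw [Q1 hα0 hα1]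

lemma Fhit_le_F1m_zpow [NeZero q] (hq : 2 ≤ q) (hα0 : 0 < α) (hα1 : α < 1) (x z : TV q) :
    Fhit (p1 q α) x z ≤ F1m α ^ (x.k - z.k) := by
  have hqR : (0:ℝ) < q := by exact_mod_cast (by omega : 0 < q)
  have hβ := F1m_pos hα0 hα1
  refine Fhit_le_superharmonic (p1_stochastic hq hα0 hα1) (p1_hfin q α)
    (φ := fun w => F1m α ^ (w.k - z.k)) (fun w => le_of_lt (zpow_pos hβ _)) (by simp) ?_ x
  intro w _
  rw [p1_row_tsum]
  have hchild : ∀ ℓ : ZMod q, F1m α ^ ((child ℓ w).k - z.k) = F1m α ^ (w.k - z.k + 1) := by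
    intro ℓ
    rw [child_k]
    congr 1
    ring
  rw [Finset.sum_congr rfl fun ℓ _ => hchild ℓ, Finset.sum_const]
  have hcard : (Finset.univ : Finset (ZMod q)).card = q := by simpa using ZMod.card q
  rw [hcard, nsmul_eq_mul]
  have hk : (pred w).k - z.k = w.k - z.k - 1 := by rw [pred_k]; ring
  rw [hk]
  have : α / q * ((q : ℝ) * F1m α ^ (w.k - z.k + 1)) = α * F1m α ^ (w.k - z.k + 1) := by
    field_simp
  rw [this, zpow_rec_down hα0 hα1]

lemma Fhit_pred_le [NeZero q] (hq : 2 ≤ q) (hα0 : 0 < α) (hα1 : α < 1) (x : TV q) :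
    Fhit (p1 q α) x (pred x) ≤ F1m α := by
  have := Fhit_le_F1m_zpow hq hα0 hα1 x (pred x)
  rwa [pred_k, show x.k - (x.k - 1) = (1:ℤ) by ring, zpow_one] at this

/-- The end `ξ_z` obtained by extending the configuration of a vertex `z`. -/
def endOf {q : ℕ} (z : TV q) : ℤ → ZMod q := fun t => z.σ (t - z.k)

lemma endOf_bddBelow (z : TV q) : BoundedBelowSupp q (endOf z) := by
  obtain ⟨B, hB⟩ := exists_supp_lb z.σ z.fin
  exact ⟨B + z.k, fun t ht => hB _ (by omega)⟩

lemma bconf_endOf_self (z : TV q) : bconf q z (endOf z) = z.k := by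
  refine le_antisymm (bconf_le_k z (endOf_bddBelow z)) ?_
  refine le_bconf _ _ fun m hm => ?_
  rcases hm with hm | hm
  · exact absurd rfl hm.2
  · exact le_of_eq (id hm).symm

lemma Fhit_up_le [NeZero q] (hq : 2 ≤ q) (hα0 : 0 < α) (hα1 : α < 1) (z : TV q) :
    Fhit (p1 q α) (pred z) z ≤ F1p q α := by
  have hqR : (0:ℝ) < q := by exact_mod_cast (by omega : 0 < q)
  have hβ := F1m_pos hα0 hα1
  have hγ := F1p_pos hq hα0 hα1
  have hβne : F1m α ≠ 0 := ne_of_gt hβ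
  have hγne : F1p q α ≠ 0 := ne_of_gt hγ
  have hξ := endOf_bddBelow z
  set ξz := endOf z with hξz
  set φ : TV q → ℝ :=
    fun w => F1m α ^ (w.k - bconf q w ξz) * F1p q α ^ (z.k - bconf q w ξz) with hφ
  have hmain : ∀ w, Fhit (p1 q α) w z ≤ φ w := by
    refine Fhit_le_superharmonic (p1_stochastic hq hα0 hα1) (p1_hfin q α)
      (fun w => le_of_lt (mul_pos (zpow_pos hβ _) (zpow_pos hγ _))) ?_ ?_
    · rw [hφ]
      simp only
      rw [bconf_endOf_self]
      norm_num
    · intro w _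
      rw [p1_row_tsum]
      rcases lt_or_eq_of_le (bconf_le_k w hξ) with hb | hb
      · -- `w` is off the ray: all children behave alike
        have hpredb : bconf q (pred w) ξz = bconf q w ξz := by
          rw [bconf_pred w hξ, min_eq_left (by omega)]
        have hchild : ∀ ℓ : ZMod q, φ (child ℓ w)
            = F1m α ^ (w.k + 1 - bconf q w ξz) * F1p q α ^ (z.k - bconf q w ξz) := by
          intro ℓ
          rw [hφ]
          simp only
          rw [bconf_child_of_lt hξ ℓ hb, child_k]
        rw [Finset.sum_congr rfl fun ℓ _ => hchild ℓ, Finset.sum_const]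
        have hcard : (Finset.univ : Finset (ZMod q)).card = q := by simpa using ZMod.card q
        rw [hcard, nsmul_eq_mul]
        have hφpred : φ (pred w)
            = F1m α ^ (w.k - 1 - bconf q w ξz) * F1p q α ^ (z.k - bconf q w ξz) := by
          rw [hφ]; simp only; rw [hpredb, pred_k]
        rw [hφpred]
        have hsimp : α / q * ((q:ℝ) * (F1m α ^ (w.k + 1 - bconf q w ξz)
            * F1p q α ^ (z.k - bconf q w ξz)))
            = α * (F1m α ^ (w.k + 1 - bconf q w ξz) * F1p q α ^ (z.k - bconf q w ξz)) := by
          field_simp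
        rw [hsimp]
        refine le_of_eq ?_
        have e1 : w.k - 1 - bconf q w ξz = (w.k - bconf q w ξz) - 1 := by ring
        have e2 : w.k + 1 - bconf q w ξz = (w.k - bconf q w ξz) + 1 := by ring
        rw [e1, e2, hφ]
        simp only
        calc (1 - α) * (F1m α ^ (w.k - bconf q w ξz - 1) * F1p q α ^ (z.k - bconf q w ξz))
              + α * (F1m α ^ (w.k - bconf q w ξz + 1) * F1p q α ^ (z.k - bconf q w ξz))
            = ((1 - α) * F1m α ^ (w.k - bconf q w ξz - 1)
                + α * F1m α ^ (w.k - bconf q w ξz + 1)) * F1p q α ^ (z.k - bconf q w ξz) := by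
              ring
          _ = F1m α ^ (w.k - bconf q w ξz) * F1p q α ^ (z.k - bconf q w ξz) := by
              rw [zpow_rec_down hα0 hα1]
      · -- `w` is on the ray `ω ξ_z`
        set ℓ₀ := ξz (w.k + 1) with hℓ₀
        have hpredb : bconf q (pred w) ξz = w.k - 1 := by
          rw [bconf_pred w hξ, hb, min_eq_right (by omega)]
        have hφpred : φ (pred w) = F1p q α ^ (z.k - w.k + 1) := by
          rw [hφ]; simp only; rw [hpredb, pred_k, sub_self, zpow_zero, one_mul]
          congr 1
          ring
        have hsplit : ∑ ℓ : ZMod q, φ (child ℓ w)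
            = F1p q α ^ (z.k - w.k - 1)
              + ((q:ℝ) - 1) * (F1m α * F1p q α ^ (z.k - w.k)) := by
          rw [← Finset.add_sum_erase _ _ (Finset.mem_univ ℓ₀)]
          have h1 : φ (child ℓ₀ w) = F1p q α ^ (z.k - w.k - 1) := by
            rw [hφ]; simp only
            rw [bconf_child_of_eq_eq hξ hb rfl, child_k, sub_self, zpow_zero, one_mul]
            congr 1
            ring
          have h2 : ∀ ℓ ∈ Finset.univ.erase ℓ₀, φ (child ℓ w)
              = F1m α * F1p q α ^ (z.k - w.k) := by
            intro ℓ hℓ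
            have hne : ξz (w.k + 1) ≠ ℓ := fun h => (Finset.mem_erase.mp hℓ).1 h.symm
            rw [hφ]; simp only
            rw [bconf_child_of_eq_ne hξ hb hne, child_k,
              show w.k + 1 - w.k = (1:ℤ) by ring, zpow_one]
          rw [h1, Finset.sum_congr rfl h2, Finset.sum_const, Finset.card_erase_of_mem
            (Finset.mem_univ ℓ₀), nsmul_eq_mul]
          have hcard : (Finset.univ : Finset (ZMod q)).card = q := by simpa using ZMod.card q
          rw [hcard]
          congr 2
          rw [Nat.cast_sub (by omega)]
          norm_num
        rw [hφpred, hsplit]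
        have hφw : φ w = F1p q α ^ (z.k - w.k) := by
          rw [hφ]; simp only; rw [hb, sub_self, zpow_zero, one_mul]
        rw [hφw]
        refine le_of_eq ?_
        set u := F1p q α ^ (z.k - w.k - 1) with hu
        have hu1 : F1p q α ^ (z.k - w.k) = u * F1p q α := by
          rw [hu, ← zpow_add_one₀ hγne]
          congr 1
          ring
        have hu2 : F1p q α ^ (z.k - w.k + 1) = u * F1p q α ^ (2:ℕ) := by
          rw [hu, ← zpow_natCast (F1p q α) 2, ← zpow_add₀ hγne]
          congr 1
          ring
        rw [hu1, hu2]
        have hQ2 := Q2 hq hα0 hα1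
        linear_combination u * hQ2
  have hpz : bconf q (pred z) ξz = z.k - 1 := by
    rw [bconf_pred z hξ]
    rw [hξz] at *
    rw [bconf_endOf_self, min_eq_right (by omega)]
  calc Fhit (p1 q α) (pred z) z ≤ φ (pred z) := hmain (pred z)
    _ = F1p q α := by
        rw [hφ]
        simp only
        rw [hpz, pred_k, sub_self, zpow_zero, one_mul,
          show z.k - (z.k - 1) = (1:ℤ) by ring, zpow_one]

end EdgeUpper

section EdgeExact

variable {q : ℕ} {α : ℝ}

lemma p1_Fhit_step [NeZero q] (hq : 2 ≤ q) (hα0 : 0 < α) (hα1 : α < 1)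
    {x z : TV q} (hxz : x ≠ z) :
    Fhit (p1 q α) x z = (1 - α) * Fhit (p1 q α) (pred x) z
      + α / q * ∑ ℓ : ZMod q, Fhit (p1 q α) (child ℓ x) z := by
  rw [Fhit_step (p1_stochastic hq hα0 hα1) (p1_hfin q α) hxz, p1_row_tsum]

lemma desc_child (ℓ : ZMod q) (x : TV q) : Desc (child ℓ x) x :=
  ⟨1, by rw [Function.iterate_one, pred_child]⟩

set_option maxHeartbeats 1000000 in
lemma Fhit_pred_eq [NeZero q] (hq : 2 ≤ q) (hα0 : 0 < α) (hα1 : α < 1) (x : TV q) :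
    Fhit (p1 q α) x (pred x) = F1m α := by
  have hp := p1_stochastic hq hα0 hα1
  have hfin := p1_hfin q α
  have hqR : (0:ℝ) < q := by exact_mod_cast (by omega : 0 < q)
  set f : TV q → ℝ := fun w => Fhit (p1 q α) w (pred w) with hf
  have hbdd : BddBelow (Set.range f) := ⟨0, by rintro _ ⟨w, rfl⟩; exact Fhit_nonneg hp _ _⟩
  set d := ⨅ w : TV q, f w with hd
  have hd_le : ∀ w, d ≤ f w := fun w => ciInf_le hbdd w
  have hd0 : 0 ≤ d := le_ciInf fun w => Fhit_nonneg hp _ _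
  have heq : ∀ w : TV q,
      f w = (1 - α) + α / q * ∑ ℓ : ZMod q, f (child ℓ w) * f w := by
    intro w
    have h1 := p1_Fhit_step hq hα0 hα1 (z := pred w) (Ne.symm (pred_ne w))
    have h2 : ∀ ℓ : ZMod q, Fhit (p1 q α) (child ℓ w) (pred w) = f (child ℓ w) * f w := by
      intro ℓ
      have hm := Fhit_mul hp hfin (sep_desc w) (x := child ℓ w) (desc_child ℓ w)
      rw [hm]
      congr 1
      rw [hf]
      simp only
      rw [pred_child]
    calc f w = (1 - α) * Fhit (p1 q α) (pred w) (pred w)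
          + α / q * ∑ ℓ : ZMod q, Fhit (p1 q α) (child ℓ w) (pred w) := h1
      _ = (1 - α) + α / q * ∑ ℓ : ZMod q, f (child ℓ w) * f w := by
          rw [Fhit_self, mul_one, Finset.sum_congr rfl fun ℓ _ => h2 ℓ]
  have hlow : (1 - α) + α * (d * d) ≤ d := by
    refine le_ciInf fun w => ?_
    rw [heq w]
    have hterm : ∀ ℓ : ZMod q, d * d ≤ f (child ℓ w) * f w := fun ℓ =>
      mul_le_mul (hd_le _) (hd_le _) hd0 (Fhit_nonneg hp _ _)
    have hsum : ∑ ℓ : ZMod q, (d * d) ≤ ∑ ℓ : ZMod q, f (child ℓ w) * f w :=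
      Finset.sum_le_sum fun ℓ _ => hterm ℓ
    have hcard : (Finset.univ : Finset (ZMod q)).card = q := by simpa using ZMod.card q
    have hconst : α / q * ∑ _ℓ : ZMod q, (d * d) = α * (d * d) := by
      rw [Finset.sum_const, hcard, nsmul_eq_mul]
      field_simp
    calc (1 - α) + α * (d * d) = (1 - α) + α / q * ∑ _ℓ : ZMod q, (d * d) := by rw [hconst]
      _ ≤ (1 - α) + α / q * ∑ ℓ : ZMod q, f (child ℓ w) * f w := by
          have : (0:ℝ) ≤ α / q := le_of_lt (div_pos hα0 hqR)
          nlinarith [mul_le_mul_of_nonneg_left hsum this]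
  have hdup : d ≤ F1m α := le_trans (hd_le (rootAt q 0)) (Fhit_pred_le hq hα0 hα1 _)
  have hd1 : d ≤ 1 := le_trans hdup F1m_le_one
  have hβd : F1m α ≤ d := by
    rcases le_or_gt α (1/2) with h | h
    · have hm : F1m α = 1 := min_eq_left (by rw [le_div_iff₀ hα0]; linarith)
      rw [hm]
      by_contra hcon
      push_neg at hcon
      have h1 : 0 < 1 - d := by linarith
      have h2 : (0:ℝ) ≤ 1 - 2 * α := by linarith
      nlinarith [hlow, mul_pos h1 h1,
        mul_nonneg (mul_nonneg h1.le h2) (by linarith : (0:ℝ) ≤ 1 + d)]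
    · have hm : F1m α = (1 - α) / α := min_eq_right (by rw [div_le_one hα0]; linarith)
      rw [hm, div_le_iff₀ hα0]
      by_contra hcon
      push_neg at hcon
      have h1 : 0 < (1 - α) - α * d := by nlinarith
      rcases eq_or_lt_of_le hd1 with hde | hde
      · rw [hde] at h1
        linarith
      · have h2 : 0 < 1 - d := by linarith
        nlinarith [mul_pos h2 h1, hlow]
  exact le_antisymm (Fhit_pred_le hq hα0 hα1 x) (le_trans hβd (hd_le x))

set_option maxHeartbeats 1000000 in
lemma Fhit_up_eq [NeZero q] (hq : 2 ≤ q) (hα0 : 0 < α) (hα1 : α < 1) (x : TV q) :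
    Fhit (p1 q α) (pred x) x = F1p q α := by
  have hp := p1_stochastic hq hα0 hα1
  have hfin := p1_hfin q α
  have hqR : (0:ℝ) < q := by exact_mod_cast (by omega : 0 < q)
  have hq2 : (2:ℝ) ≤ q := by exact_mod_cast hq
  have hβ0 := F1m_pos hα0 hα1
  set g : TV q → ℝ := fun w => Fhit (p1 q α) (pred w) w with hg
  have hbdd : BddBelow (Set.range g) := ⟨0, by rintro _ ⟨w, rfl⟩; exact Fhit_nonneg hp _ _⟩
  set e := ⨅ w : TV q, g w with he
  have he_le : ∀ w, e ≤ g w := fun w => ciInf_le hbdd w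
  have he0 : 0 ≤ e := le_ciInf fun w => Fhit_nonneg hp _ _
  have heq : ∀ w : TV q,
      g w = α / q + ((q:ℝ) - 1) * (α / q) * (F1m α * g w)
        + (1 - α) * (g (pred w) * g w) := by
    intro w
    have h1 := p1_Fhit_step hq hα0 hα1 (x := pred w) (z := w) (pred_ne w)
    have h2 : Fhit (p1 q α) (pred (pred w)) w = g (pred w) * g w := by
      have hm := Fhit_mul hp hfin (sep_nondesc w)
        (x := pred (pred w)) (not_desc_of_k_lt (by simp only [pred_k]; omega))
      rw [hm]
    set ℓ₀ := w.σ 0 with hℓ₀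
    have hw : w = child ℓ₀ (pred w) := eq_child_of_pred_eq rfl
    have h3 : ∑ ℓ : ZMod q, Fhit (p1 q α) (child ℓ (pred w)) w
        = 1 + ((q:ℝ) - 1) * (F1m α * g w) := by
      rw [← Finset.add_sum_erase _ _ (Finset.mem_univ ℓ₀)]
      have hterm0 : Fhit (p1 q α) (child ℓ₀ (pred w)) w = 1 := by
        rw [← hw, Fhit_self]
      have hterm : ∀ ℓ ∈ Finset.univ.erase ℓ₀,
          Fhit (p1 q α) (child ℓ (pred w)) w = F1m α * g w := by
        intro ℓ hℓ
        have hℓne : ℓ ≠ ℓ₀ := (Finset.mem_erase.mp hℓ).1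
        set v := child ℓ (pred w) with hv
        have hvw : v ≠ w := by
          intro hvw
          have hcc : child ℓ (pred w) = child ℓ₀ (pred w) := by
            rw [← hv, hvw]
            exact hw
          exact hℓne (child_inj hcc)
        have hpv : pred v = pred w := pred_child ℓ (pred w)
        have hny : ¬ Desc w v := by
          intro hdw
          have : w = v := hdw.eq_of_k_le (by rw [hv, child_k, pred_k]; omega)
          exact hvw this.symm
        have hm := Fhit_mul hp hfin (sep_confl hpv hny (Ne.symm (pred_ne w)))
          (x := v) (Or.inl (desc_self v))
        rw [hm]
        congr 1
        rw [← hpv, Fhit_pred_eq hq hα0 hα1]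
      rw [hterm0, Finset.sum_congr rfl hterm, Finset.sum_const,
        Finset.card_erase_of_mem (Finset.mem_univ ℓ₀), nsmul_eq_mul]
      have hcard : (Finset.univ : Finset (ZMod q)).card = q := by simpa using ZMod.card q
      rw [hcard, Nat.cast_sub (by omega)]
      norm_num
    calc g w = (1 - α) * Fhit (p1 q α) (pred (pred w)) w
          + α / q * ∑ ℓ : ZMod q, Fhit (p1 q α) (child ℓ (pred w)) w := h1
      _ = (1 - α) * (g (pred w) * g w)
          + α / q * (1 + ((q:ℝ) - 1) * (F1m α * g w)) := by rw [h2, h3]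
      _ = α / q + ((q:ℝ) - 1) * (α / q) * (F1m α * g w)
          + (1 - α) * (g (pred w) * g w) := by ring
  have hlow : α / q + ((q:ℝ) - 1) * (α / q) * (F1m α * e) + (1 - α) * (e * e) ≤ e := by
    refine le_ciInf fun w => ?_
    rw [heq w]
    have hco : (0:ℝ) ≤ ((q:ℝ) - 1) * (α / q) :=
      mul_nonneg (by linarith) (le_of_lt (div_pos hα0 hqR))
    have t1 : ((q:ℝ) - 1) * (α / q) * (F1m α * e)
        ≤ ((q:ℝ) - 1) * (α / q) * (F1m α * g w) :=
      mul_le_mul_of_nonneg_left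
        (mul_le_mul_of_nonneg_left (he_le w) (le_of_lt hβ0)) hco
    have t2 : (1 - α) * (e * e) ≤ (1 - α) * (g (pred w) * g w) :=
      mul_le_mul_of_nonneg_left
        (mul_le_mul (he_le _) (he_le _) he0 (Fhit_nonneg hp _ _)) (by linarith)
    linarith
  have heup : e ≤ F1p q α := le_trans (he_le (rootAt q 0)) (Fhit_up_le hq hα0 hα1 _)
  have hγe : F1p q α ≤ e := by
    rcases le_or_gt α (1/2) with h | h
    · have hm : F1m α = 1 := min_eq_left (by rw [le_div_iff₀ hα0]; linarith)
      have hγv : F1p q α = α / ((1 - α) * q) := by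
        refine min_eq_right ?_
        rw [div_le_div_iff₀ (by nlinarith) hqR]
        nlinarith
      rw [hm] at hlow
      rw [hγv]
      rcases le_or_gt 1 e with h1 | h1
      · calc α / ((1 - α) * q) ≤ 1 := by
              rw [div_le_one (by nlinarith)]
              nlinarith
          _ ≤ e := h1
      · rw [div_le_iff₀ (by nlinarith)]
        by_contra hcon
        push_neg at hcon
        have hx1 : 0 < 1 - e := by linarith
        have hx2 : 0 < α - e * ((1 - α) * q) := by linarith
        have hqne : (q:ℝ) ≠ 0 := ne_of_gt hqR
        have hlow' : α + ((q:ℝ) - 1) * α * e + (1 - α) * (e * e) * q ≤ e * q := by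
          calc α + ((q:ℝ) - 1) * α * e + (1 - α) * (e * e) * q
              = (α / q + ((q:ℝ) - 1) * (α / q) * (1 * e) + (1 - α) * (e * e)) * q := by
                field_simp
                try ring
            _ ≤ e * q := mul_le_mul_of_nonneg_right hlow hqR.le
        nlinarith [mul_pos hx1 hx2, hlow']
    · have hm : F1m α = (1 - α) / α := min_eq_right (by rw [div_le_one hα0]; linarith)
      have hγv : F1p q α = 1 / q := by
        refine min_eq_left ?_
        rw [div_le_div_iff₀ hqR (by nlinarith)]
        nlinarith
      rw [hm] at hlow
      rw [hγv]
      by_contra hcon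
      push_neg at hcon
      have hb1 : 0 < 1 - (q:ℝ) * e := by
        rw [lt_div_iff₀ hqR] at hcon
        nlinarith [hcon]
      have hb2 : 0 < α - (1 - α) * e := by nlinarith
      have hexp : ((q:ℝ) - 1) * (α / q) * ((1 - α) / α * e) = ((q:ℝ) - 1) * (1 - α) / q * e := by
        field_simp
      rw [hexp] at hlow
      have hqne : (q:ℝ) ≠ 0 := ne_of_gt hqR
      have hlow' : α + ((q:ℝ) - 1) * (1 - α) * e + (1 - α) * (e * e) * q ≤ e * q := by
        calc α + ((q:ℝ) - 1) * (1 - α) * e + (1 - α) * (e * e) * q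
            = (α / q + ((q:ℝ) - 1) * (1 - α) / q * e + (1 - α) * (e * e)) * q := by
              field_simp
              try ring
          _ ≤ e * q := mul_le_mul_of_nonneg_right hlow hqR.le
      nlinarith [mul_pos hb1 hb2, hlow']
  exact le_antisymm (Fhit_up_le hq hα0 hα1 x) (le_trans hγe (he_le x))

end EdgeExact

section Powers

variable {q : ℕ} {α : ℝ}

lemma Fhit_down_iter [NeZero q] (hq : 2 ≤ q) (hα0 : 0 < α) (hα1 : α < 1) :
    ∀ (i : ℕ) (x : TV q), Fhit (p1 q α) x (pred^[i] x) = F1m α ^ i := by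
  intro i
  induction i with
  | zero =>
    intro x
    rw [Function.iterate_zero_apply, pow_zero]
    exact Fhit_self _ x
  | succ i ih =>
    intro x
    rw [Function.iterate_succ_apply']
    have hm := Fhit_mul (p1_stochastic hq hα0 hα1) (p1_hfin q α)
      (sep_desc (pred^[i] x)) (x := x) ⟨i, rfl⟩
    rw [hm, ih, Fhit_pred_eq hq hα0 hα1, pow_succ]

lemma Fhit_up_iter [NeZero q] (hq : 2 ≤ q) (hα0 : 0 < α) (hα1 : α < 1) :
    ∀ (j : ℕ) (y a : TV q), pred^[j] y = a → Fhit (p1 q α) a y = F1p q α ^ j := by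
  intro j
  induction j with
  | zero =>
    intro y a h
    rw [← h, Function.iterate_zero_apply, pow_zero]
    exact Fhit_self _ y
  | succ j ih =>
    intro y a h
    have ha : pred^[j] (pred y) = a := by
      rw [← Function.iterate_succ_apply]
      exact h
    have hk : a.k = y.k - ((j:ℤ) + 1) := by
      rw [← h, pred_iter_k]
      push_cast
      ring
    have hnd : ¬ Desc a y := not_desc_of_k_lt (by omega)
    have hm := Fhit_mul (p1_stochastic hq hα0 hα1) (p1_hfin q α)
      (sep_nondesc y) (x := a) hnd
    rw [hm, ih (pred y) a ha, Fhit_up_eq hq hα0 hα1, pow_succ]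

end Powers

section Geometry

variable {q : ℕ} {α : ℝ}

lemma ray_k (ξ : ℤ → ZMod q) (hξ : BoundedBelowSupp q ξ) (m : ℤ) :
    (rayVertex q ξ hξ m).k = m := rfl

lemma ray_σ (ξ : ℤ → ZMod q) (hξ : BoundedBelowSupp q ξ) (m n : ℤ) :
    (rayVertex q ξ hξ m).σ n = if n ≤ 0 then ξ (m + n) else 0 := rfl

lemma ray_pred_iter (ξ : ℤ → ZMod q) (hξ : BoundedBelowSupp q ξ) {m b : ℤ} (h : b ≤ m) :
    pred^[(m - b).toNat] (rayVertex q ξ hξ m) = rayVertex q ξ hξ b := by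
  apply TV.ext'
  · funext n
    rw [pred_iter_σ, ray_σ ξ hξ b n]
    by_cases hn : n ≤ 0
    · rw [if_pos hn, if_pos hn, ray_σ ξ hξ m, if_pos (by omega)]
      congr 1
      omega
    · rw [if_neg hn, if_neg hn]
  · simp only [pred_iter_k, ray_k]
    omega

lemma x_pred_iter_to_bconf {ξ : ℤ → ZMod q} (hξ : BoundedBelowSupp q ξ) (x : TV q) :
    pred^[(x.k - bconf q x ξ).toNat] x = rayVertex q ξ hξ (bconf q x ξ) := by
  have hb := bconf_le_k x hξ
  apply TV.ext'
  · funext n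
    rw [pred_iter_σ, ray_σ]
    by_cases hn : n ≤ 0
    · rw [if_pos hn, if_pos hn]
      have hagree := agree_of_lt_bconf x hξ (m := bconf q x ξ + n - 1) (by omega)
      have h1 : bconf q x ξ + n - 1 + 1 = bconf q x ξ + n := by ring
      rw [h1] at hagree
      rw [hagree]
      congr 1
      omega
    · rw [if_neg hn, if_neg hn]
  · simp only [pred_iter_k, ray_k]
    omega

lemma x_eq_ray_of_bconf_eq {ξ : ℤ → ZMod q} (hξ : BoundedBelowSupp q ξ) (x : TV q)
    (h : bconf q x ξ = x.k) : x = rayVertex q ξ hξ x.k := by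
  apply TV.ext'
  · funext n
    rw [ray_σ]
    by_cases hn : n ≤ 0
    · rw [if_pos hn]
      have hagree := agree_of_lt_bconf x hξ (m := x.k + n - 1) (by omega)
      have h1 : x.k + n - 1 + 1 = x.k + n := by ring
      rw [h1] at hagree
      rw [hagree]
      congr 1
      ring
    · rw [if_neg hn, x.upz n (by omega)]
  · rfl

lemma ray_ancestor {ξ : ℤ → ZMod q} (hξ : BoundedBelowSupp q ξ) (x : TV q) {m : ℤ}
    (hm1 : m ≤ x.k) (hξ0 : ∀ t ≤ m, ξ t = 0) (hσ0 : ∀ s ≤ m - x.k, x.σ s = 0) :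
    pred^[(x.k - m).toNat] x = rayVertex q ξ hξ m := by
  apply TV.ext'
  · funext n
    rw [pred_iter_σ, ray_σ]
    by_cases hn : n ≤ 0
    · rw [if_pos hn, if_pos hn, hσ0 _ (by omega), hξ0 _ (by omega)]
    · rw [if_neg hn, if_neg hn]
  · simp only [pred_iter_k, ray_k]
    omega

lemma Fhit_ray_pos [NeZero q] (hq : 2 ≤ q) (hα0 : 0 < α) (hα1 : α < 1)
    (ξ : ℤ → ZMod q) (hξ : BoundedBelowSupp q ξ) (x : TV q) {m : ℤ} (hm : x.k ≤ m) :
    Fhit (p1 q α) x (rayVertex q ξ hξ m)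
      = F1m α ^ (x.k - bconf q x ξ).toNat * F1p q α ^ (m - bconf q x ξ).toNat := by
  have hb := bconf_le_k x hξ
  rcases eq_or_lt_of_le hb with heq | hlt
  · have hx : x = rayVertex q ξ hξ (bconf q x ξ) := by
      rw [heq]
      exact x_eq_ray_of_bconf_eq hξ x heq
    rw [show (x.k - bconf q x ξ).toNat = 0 by omega, pow_zero, one_mul]
    have hup := Fhit_up_iter hq hα0 hα1 ((m - bconf q x ξ).toNat)
      (rayVertex q ξ hξ m) (rayVertex q ξ hξ (bconf q x ξ))
      (ray_pred_iter ξ hξ (by omega))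
    rw [← hx] at hup
    exact hup
  · set b := bconf q x ξ with hbdef
    have hpc : pred (pred^[(x.k - b - 1).toNat] x) = rayVertex q ξ hξ b := by
      rw [← Function.iterate_succ_apply' pred ((x.k - b - 1).toNat) x]
      rw [show (x.k - b - 1).toNat.succ = (x.k - b).toNat by omega]
      exact x_pred_iter_to_bconf hξ x
    have hc1k : (pred^[(x.k - b - 1).toNat] x).k = b + 1 := by
      rw [pred_iter_k]
      omega
    have hbS : ξ (b + 1) ≠ x.σ (b + 1 - x.k) := by
      rcases bconf_mem x hξ with h | h
      · exact h.2
      · exfalso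
        have : b = x.k := h
        omega
    have hny : ¬ Desc (rayVertex q ξ hξ m) (pred^[(x.k - b - 1).toNat] x) := by
      rintro ⟨t, ht⟩
      have htv := desc_level_determined ht
      rw [hc1k, ray_k] at htv
      have h0 : (pred^[t] (rayVertex q ξ hξ m)).σ 0 = ξ (b + 1) := by
        rw [pred_iter_σ, if_pos le_rfl, ray_σ, if_pos (by omega)]
        congr 1
        omega
      have h1 : (pred^[(x.k - b - 1).toNat] x).σ 0 = x.σ (b + 1 - x.k) := by
        rw [pred_iter_σ, if_pos le_rfl]
        congr 1
        omega
      rw [ht, h1] at h0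
      exact hbS h0.symm
    have hyc : rayVertex q ξ hξ m ≠ rayVertex q ξ hξ b := by
      intro h
      have := congrArg TV.k h
      rw [ray_k, ray_k] at this
      omega
    have hmul := Fhit_mul (p1_stochastic hq hα0 hα1) (p1_hfin q α)
      (sep_confl hpc hny hyc) (x := x) (Or.inl ⟨(x.k - b - 1).toNat, rfl⟩)
    rw [hmul]
    congr 1
    · rw [← x_pred_iter_to_bconf hξ x]
      exact Fhit_down_iter hq hα0 hα1 _ x
    · exact Fhit_up_iter hq hα0 hα1 _ _ _ (ray_pred_iter ξ hξ (by omega))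

end Geometry

end Aux

/-- convergence of Martin kernels on `T_q` along a geodesic `ω ξ`. -/
theorem martin_convergence (q : ℕ) (hq : 2 ≤ q) (α : ℝ) (hα0 : 0 < α) (hα1 : α < 1)
    (ξ : ℤ → ZMod q) (hξ : BoundedBelowSupp q ξ) (x : TV q) :
    (∃ M : ℤ, ∀ m ≥ M,
        Fhit (p1 q α) x (rayVertex q ξ hξ m) / Fhit (p1 q α) (rootAt q 0) (rayVertex q ξ hξ m)
          = F1m α ^ x.k * (F1m α * F1p q α) ^ (bconf q (rootAt q 0) ξ - bconf q x ξ)) ∧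
    (∃ M : ℤ, ∀ m ≤ M,
        Fhit (p1 q α) x (rayVertex q ξ hξ m) / Fhit (p1 q α) (rootAt q 0) (rayVertex q ξ hξ m)
          = F1m α ^ x.k) := by
  haveI : NeZero q := ⟨by omega⟩
  have hβ0 := F1m_pos hα0 hα1
  have hγ0 := F1p_pos hq hα0 hα1
  have hβne : F1m α ≠ 0 := ne_of_gt hβ0
  have hγne : F1p q α ≠ 0 := ne_of_gt hγ0
  constructor
  · refine ⟨max x.k 0, fun m hm => ?_⟩
    have hm1 : x.k ≤ m := le_trans (le_max_left _ _) hm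
    have hm2 : (rootAt q 0).k ≤ m := by
      show (0:ℤ) ≤ m
      exact le_trans (le_max_right x.k 0) hm
    rw [Fhit_ray_pos hq hα0 hα1 ξ hξ x hm1, Fhit_ray_pos hq hα0 hα1 ξ hξ (rootAt q 0) hm2,
      show (rootAt q 0).k = (0:ℤ) from rfl]
    set b := bconf q x ξ with hb
    set b₀ := bconf q (rootAt q 0) ξ with hb0
    have hbk : b ≤ x.k := bconf_le_k x hξ
    have hb0k : b₀ ≤ 0 := bconf_le_k (rootAt q 0) hξ
    have e1 : F1m α ^ (x.k - b).toNat = F1m α ^ (x.k - b) := by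
      rw [← zpow_natCast]
      congr 1
      omega
    have e2 : F1p q α ^ (m - b).toNat = F1p q α ^ (m - b) := by
      rw [← zpow_natCast]
      congr 1
      omega
    have e3 : F1m α ^ ((0:ℤ) - b₀).toNat = F1m α ^ ((0:ℤ) - b₀) := by
      rw [← zpow_natCast]
      congr 1
      omega
    have e4 : F1p q α ^ (m - b₀).toNat = F1p q α ^ (m - b₀) := by
      rw [← zpow_natCast]
      congr 1
      omega
    rw [e1, e2, e3, e4]
    rw [div_eq_iff (ne_of_gt (mul_pos (zpow_pos hβ0 _) (zpow_pos hγ0 _)))]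
    calc F1m α ^ (x.k - b) * F1p q α ^ (m - b)
        = F1m α ^ (x.k + (b₀ - b) + ((0:ℤ) - b₀)) * F1p q α ^ ((b₀ - b) + (m - b₀)) := by
          rw [show x.k - b = x.k + (b₀ - b) + ((0:ℤ) - b₀) by ring,
            show m - b = (b₀ - b) + (m - b₀) by ring]
      _ = (F1m α ^ x.k * F1m α ^ (b₀ - b) * F1m α ^ ((0:ℤ) - b₀))
            * (F1p q α ^ (b₀ - b) * F1p q α ^ (m - b₀)) := by
          rw [zpow_add₀ hβne, zpow_add₀ hβne, zpow_add₀ hγne]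
      _ = F1m α ^ x.k * (F1m α * F1p q α) ^ (b₀ - b)
            * (F1m α ^ ((0:ℤ) - b₀) * F1p q α ^ (m - b₀)) := by
          rw [mul_zpow]
          ring
  · obtain ⟨N₁, hN₁⟩ := id hξ
    obtain ⟨B, hB⟩ := exists_supp_lb x.σ x.fin
    refine ⟨min (min x.k 0) (min (N₁ - 1) (B + x.k - 1)), fun m hm => ?_⟩
    have h1 : Fhit (p1 q α) x (rayVertex q ξ hξ m) = F1m α ^ (x.k - m).toNat := by
      rw [← ray_ancestor hξ x (by omega) (fun t ht => hN₁ t (by omega))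
        (fun s hs => hB s (by omega))]
      exact Fhit_down_iter hq hα0 hα1 _ x
    have h2 : Fhit (p1 q α) (rootAt q 0) (rayVertex q ξ hξ m)
        = F1m α ^ ((0:ℤ) - m).toNat := by
      rw [← ray_ancestor hξ (rootAt q 0) (show m ≤ (rootAt q 0).k by show m ≤ (0:ℤ); omega)
        (fun t ht => hN₁ t (by omega)) (fun s _ => rfl)]
      exact Fhit_down_iter hq hα0 hα1 _ _
    rw [h1, h2]
    have e1 : F1m α ^ (x.k - m).toNat = F1m α ^ (x.k - m) := by
      rw [← zpow_natCast]
      congr 1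
      omega
    have e2 : F1m α ^ ((0:ℤ) - m).toNat = F1m α ^ ((0:ℤ) - m) := by
      rw [← zpow_natCast]
      congr 1
      omega
    rw [e1, e2, div_eq_iff (ne_of_gt (zpow_pos hβ0 _)), ← zpow_add₀ hβne]
    congr 1
    ring

end LampDL
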